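/- Main theorem: Let A ∈ GL₂(ℝ), let D ∈ ℝ^{2×N} be the matrix with first row (d₁,…,d_{N₁}, d'_1,…,d'_{N₂}) and second row N₁ zeros followed by N₂ ones, with D D^T invertible, and let P be an N×N permutation matrix. Set Z = A D P and suppose Z = Q Σ V^T is a reduced SVD with Q orthogonal 2×2, Σ diagonal invertible, and V^T ∈ ℝ^{2×N} having orthonormal rows. Define H = P^T [0ᵀ, 1ᵀ]^T ∈ ℝ^N. Then V V^T H = H. -/
import Mathlib

open Matrix

theorem stmt_11 (N₁ N₂ : ℕ) (hN₂ : 1 ≤ N₂) (α β : ℝ) (hβ : β ≠ 0)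
    (A : Matrix (Fin 2) (Fin 2) ℝ) (hA : A = !![1, 0; α, β])
    (d : Fin N₁ → ℝ) (d' : Fin N₂ → ℝ)
    (D : Matrix (Fin 2) (Fin (N₁ + N₂)) ℝ)
    (hD : D = Matrix.of ![Fin.append d d', Fin.append (0 : Fin N₁ → ℝ) (1 : Fin N₂ → ℝ)])
    (hGram : IsUnit (D * Dᵀ).det)
    (σ : Equiv.Perm (Fin (N₁ + N₂))) (P : Matrix (Fin (N₁ + N₂)) (Fin (N₁ + N₂)) ℝ)
    (hP : P = σ.permMatrix ℝ)
    (Q S : Matrix (Fin 2) (Fin 2) ℝ) (Vt : Matrix (Fin 2) (Fin (N₁ + N₂)) ℝ)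
    (hQ : Qᵀ * Q = 1) (hSdiag : ∀ i j, i ≠ j → S i j = 0) (hS : IsUnit S.det)
    (hSVD : A * D * P = Q * S * Vt) (hV : Vt * Vtᵀ = 1)
    (H : Fin (N₁ + N₂) → ℝ)
    (hH : H = Pᵀ.mulVec (Fin.append (0 : Fin N₁ → ℝ) (1 : Fin N₂ → ℝ))) :
    (Vtᵀ * Vt).mulVec H = H := by
  -- A is invertible since det A = β ≠ 0
  have hdet : A.det = β := by rw [hA]; simp [Matrix.det_fin_two_of]
  have hAdet : IsUnit Aᵀ.det := by
    rw [Matrix.det_transpose, hdet]; exact (isUnit_iff_ne_zero).2 hβ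
  set u : Fin 2 → ℝ := ![0, 1] with hu
  -- Dᵀ.mulVec u = second row of D
  have hDu : Dᵀ.mulVec u = Fin.append (0 : Fin N₁ → ℝ) (1 : Fin N₂ → ℝ) := by
    funext j
    simp [hD, Matrix.mulVec, dotProduct, Fin.sum_univ_two, hu]
  -- H = Zᵀ.mulVec w with w = (Aᵀ)⁻¹.mulVec u
  set w : Fin 2 → ℝ := (Aᵀ)⁻¹.mulVec u with hw
  have hHZ : H = (A * D * P)ᵀ.mulVec w := by
    rw [hH, ← hDu, hw]
    rw [Matrix.transpose_mul, Matrix.transpose_mul]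
    rw [Matrix.mulVec_mulVec, Matrix.mulVec_mulVec, ← Matrix.mulVec_mulVec]
    rw [Matrix.mul_assoc Pᵀ, Matrix.mul_assoc Dᵀ, Matrix.mul_nonsing_inv _ hAdet,
      Matrix.mul_one, ← Matrix.mulVec_mulVec]
  -- Vtᵀ * Vt fixes the row space of Z
  have hZt : (A * D * P)ᵀ = Vtᵀ * (Sᵀ * Qᵀ) := by
    rw [hSVD, Matrix.transpose_mul, Matrix.transpose_mul]
  have key : (Vtᵀ * Vt) * (A * D * P)ᵀ = (A * D * P)ᵀ := by
    rw [hZt, Matrix.mul_assoc, ← Matrix.mul_assoc Vt, hV, Matrix.one_mul]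
  rw [hHZ, Matrix.mulVec_mulVec, key]
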